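/- Let P be a totally ordered set, V a pointwise finite dimensional persistence module indexed by P, z ∈ P, v ∈ V_z, and I = {x ∈ P | x ≤ z and V_{x,z}^{-1}(v) ≠ ∅}. Then there exists a family (u_x)_{x ∈ I} with u_x ∈ V_x such that V_{x,z}(u_x) = v for all x ∈ I, and V_{x,y}(u_x) = u_y for all x, y ∈ I with x ≤ y. -/

import Mathlib

universe u v w w'

/-- A persistence module indexed by a poset `P`, over a field `k`. -/
structure PersMod (k : Type u) [Field k] (P : Type v) [PartialOrder P] :
    Type (max u v (w + 1)) where
  space : P → Type w
  [acg : ∀ x, AddCommGroup (space x)]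
  [mod : ∀ x, Module k (space x)]
  map : ∀ {x y : P}, x ≤ y → (space x →ₗ[k] space y)
  map_id : ∀ x : P, map (le_refl x) = LinearMap.id
  map_comp : ∀ {x y z : P} (hxy : x ≤ y) (hyz : y ≤ z),
    (map hyz).comp (map hxy) = map (hxy.trans hyz)

attribute [instance] PersMod.acg PersMod.mod

variable (k : Type u) [Field k] {P : Type v} [PartialOrder P]

/-- A morphism of persistence modules (a natural transformation). -/
structure PersHom (V : PersMod.{u, v, w} k P) (W : PersMod.{u, v, w'} k P) where
  app : ∀ x : P, V.space x →ₗ[k] W.space x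
  natural : ∀ {x y : P} (h : x ≤ y) (v : V.space x),
    app y (V.map h v) = W.map h (app x v)

/-- An isomorphism of persistence modules. -/
structure PersIso (V : PersMod.{u, v, w} k P) (W : PersMod.{u, v, w'} k P) where
  app : ∀ x : P, V.space x ≃ₗ[k] W.space x
  natural : ∀ {x y : P} (h : x ≤ y) (v : V.space x),
    app y (V.map h v) = W.map h (app x v)

/-- A subset `I` of a poset is convex if `x ≤ y ≤ z`, `x ∈ I`, `z ∈ I` imply `y ∈ I`. -/
def IsConvexIn (I : Set P) : Prop :=
  ∀ ⦃x y z : P⦄, x ∈ I → z ∈ I → x ≤ y → y ≤ z → y ∈ I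

/-- A subset `I` of a poset is connected if any two points of `I` are joined by a
zigzag path inside `I`. -/
def IsConnectedIn (I : Set P) : Prop :=
  ∀ x ∈ I, ∀ z ∈ I, ∃ (n : ℕ) (c : ℕ → P), (∀ i ≤ n, c i ∈ I) ∧ c 0 = x ∧ c n = z ∧
    ∀ i < n, c i ≤ c (i + 1) ∨ c (i + 1) ≤ c i

/-- An interval in a poset: nonempty, convex and connected. -/
def IsPosetInterval (I : Set P) : Prop :=
  I.Nonempty ∧ IsConvexIn I ∧ IsConnectedIn I

open Classical in
/-- The subspace of `k` used as the value of the constant module at `x`. -/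
noncomputable def constSub (I : Set P) (x : P) : Submodule k k :=
  if x ∈ I then ⊤ else ⊥

open Classical in
/-- The structure map of the constant module. -/
noncomputable def constMap (I : Set P) (x y : P) :
    constSub k I x →ₗ[k] constSub k I y :=
  LinearMap.codRestrict (constSub k I y)
    ((if y ∈ I then (LinearMap.id : k →ₗ[k] k) else 0).comp (constSub k I x).subtype)
    (fun c => by
      by_cases hy : y ∈ I
      · simp [constSub, hy]
      · rw [if_neg hy, LinearMap.zero_comp, LinearMap.zero_apply]
        exact Submodule.zero_mem _)

open Classical in
/-- The constant (interval) module `M(I)` attached to a convex subset `I`. -/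
noncomputable def constMod (I : Set P) (hI : IsConvexIn I) : PersMod.{u, v, u} k P where
  space x := constSub k I x
  map {x y} _ := constMap k I x y
  map_id := fun x => by
    ext c
    by_cases hx : x ∈ I
    · simp [constMap, hx]
    · have hc : (c : k) = 0 := by
        have := c.2
        change (c : k) ∈ (if x ∈ I then ⊤ else ⊥ : Submodule k k) at this
        rw [if_neg hx] at this
        exact (Submodule.mem_bot k).mp this
      simp [constMap, hx, hc]
  map_comp := fun {x y z} hxy hyz => by
    ext c
    by_cases hz : z ∈ I
    · by_cases hy : y ∈ I
      · simp [constMap, hy, hz]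
      · have hx : x ∉ I := fun hx => hy (hI hx hz hxy hyz)
        have hc : (c : k) = 0 := by
          have := c.2
          change (c : k) ∈ (if x ∈ I then ⊤ else ⊥ : Submodule k k) at this
          rw [if_neg hx] at this
          exact (Submodule.mem_bot k).mp this
        simp [constMap, hy, hz, hc]
    · simp [constMap, hz]

/-- A submodule of a persistence module: a family of subspaces preserved by the
structure maps. -/
structure PersSubmod (V : PersMod.{u, v, w} k P) where
  carrier : ∀ x : P, Submodule k (V.space x)
  mapLe : ∀ {x y : P} (h : x ≤ y), ∀ v ∈ carrier x, V.map h v ∈ carrier y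

/-- A submodule of a persistence module, viewed as a persistence module in its own
right. -/
def PersSubmod.toPersMod {V : PersMod.{u, v, w} k P} (U : PersSubmod k V) :
    PersMod.{u, v, w} k P where
  space x := U.carrier x
  map {x y} h := (V.map h).restrict (U.mapLe h)
  map_id := fun x => by
    ext c
    simp [LinearMap.restrict_apply, V.map_id]
  map_comp := fun {x y z} hxy hyz => by
    ext c
    have := LinearMap.congr_fun (V.map_comp hxy hyz) (c : V.space x)
    simpa [LinearMap.restrict_apply] using this

/-- A persistence module is an interval module if it is isomorphic to a constant
module `M(I)` for some interval `I`. -/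
def IsIntervalModule (V : PersMod.{u, v, w} k P) : Prop :=
  ∃ (I : Set P) (hI : IsPosetInterval I), Nonempty (PersIso k V (constMod k I hI.2.1))

/-- `A` is an internal direct sum decomposition of `V`:
at each point the subspaces are independent and span everything. -/
def IsDecomp (V : PersMod.{u, v, w} k P) (A : Set (PersSubmod k V)) : Prop :=
  ∀ x : P, iSupIndep (fun U : A => (U : PersSubmod k V).carrier x) ∧
    ⨆ U : A, (U : PersSubmod k V).carrier x = ⊤

/-- An interval decomposition of `V`. -/
def IsIntervalDecomp (V : PersMod.{u, v, w} k P) (A : Set (PersSubmod k V)) : Prop :=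
  IsDecomp k V A ∧ ∀ U ∈ A, IsIntervalModule k U.toPersMod

/-- `V` has an interval decomposition. -/
def HasIntervalDecomp (V : PersMod.{u, v, w} k P) : Prop :=
  ∃ A : Set (PersSubmod k V), IsIntervalDecomp k V A

/-! A chain of nonempty affine subspaces of a finite-dimensional space has a least
element, since an inclusion between affine subspaces sharing their direction is an equality. Applied
to the images in `V_x` of the fibres `V_{y,z}⁻¹(v)`, `y ≤ x`, this shows that these images
stabilise to a nonempty affine subspace `E_x`, and that `V_{x,y}` maps `E_x` onto `E_y`. A
compatible family of points of the `E_x` is then built by Zorn's lemma, extending partial families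
defined on upper sets downwards; each extension step is again a minimum of a chain of affine
subspaces. -/

theorem AffineSubspace.exists_le_of_isChain {k W : Type*} [Field k] [AddCommGroup W] [Module k W]
    [FiniteDimensional k W] {𝒮 : Set (AffineSubspace k W)} (hchain : IsChain (· ≤ ·) 𝒮)
    (h𝒮 : 𝒮.Nonempty) (hne : ∀ A ∈ 𝒮, (A : Set W).Nonempty) :
    ∃ A ∈ 𝒮, ∀ B ∈ 𝒮, A ≤ B := by
  obtain ⟨A, hA, hmin⟩ := (InvImage.wf direction wellFounded_lt).has_min 𝒮 h𝒮
  refine ⟨A, hA, fun B hB => ?_⟩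
  rcases hchain.total hA hB with hAB | hBA
  · exact hAB
  · have hdir : B.direction = A.direction :=
      eq_of_le_of_not_lt (direction_le hBA) (hmin B hB)
    obtain ⟨p, hp⟩ := hne B hB
    exact (ext_of_direction_eq hdir ⟨p, hp, hBA hp⟩).ge

namespace PersMod

variable {k} (V : PersMod.{u, v, w} k P)

@[simp]
theorem map_map {x y z : P} (hxy : x ≤ y) (hyz : y ≤ z) (s : V.space x) :
    V.map hyz (V.map hxy s) = V.map (hxy.trans hyz) s :=
  LinearMap.congr_fun (V.map_comp hxy hyz) s

@[simp]
theorem map_refl_apply {x : P} (s : V.space x) : V.map (le_refl x) s = s := by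
  rw [V.map_id]; rfl

theorem affineSubspace_map_map {x y z : P} (hxy : x ≤ y) (hyz : y ≤ z)
    (B : AffineSubspace k (V.space x)) :
    (B.map (V.map hxy).toAffineMap).map (V.map hyz).toAffineMap =
      B.map (V.map (hxy.trans hyz)).toAffineMap := by
  rw [AffineSubspace.map_map]
  congr 1
  ext s
  simp

theorem affineSubspace_map_refl {x : P} (B : AffineSubspace k (V.space x)) :
    B.map (V.map (le_refl x)).toAffineMap = B := by
  ext s
  simp [AffineSubspace.mem_map]

end PersMod

section StableImage

variable {k} {Q : Type v} [LinearOrder Q] (V : PersMod.{u, v, w} k Q) (J : Set Q)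
  (A : ∀ x, AffineSubspace k (V.space x))

def stableImage (x : Q) : AffineSubspace k (V.space x) :=
  ⨅ (y : Q) (_ : y ∈ J) (h : y ≤ x), (A y).map (V.map h).toAffineMap

variable {V J A}

theorem stableImage_le {x : Q} (hx : x ∈ J) : stableImage V J A x ≤ A x :=
  (iInf₂_le x hx).trans ((iInf_le _ le_rfl).trans (V.affineSubspace_map_refl (A x)).le)

variable [∀ x, FiniteDimensional k (V.space x)]

theorem exists_stableImage_eq_map (hA : ∀ x ∈ J, (A x : Set (V.space x)).Nonempty)
    (hAmap : ∀ x ∈ J, ∀ y ∈ J, ∀ h : x ≤ y, (A x).map (V.map h).toAffineMap ≤ A y)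
    {x : Q} (hx : x ∈ J) :
    ∃ m ∈ J, ∃ hmx : m ≤ x, ∀ y ∈ J, ∀ hym : y ≤ m,
      stableImage V J A x = (A y).map (V.map (hym.trans hmx)).toAffineMap := by
  set 𝒮 := {B | ∃ y ∈ J, ∃ h : y ≤ x, B = (A y).map (V.map h).toAffineMap}
  have image_mono : ∀ y ∈ J, ∀ y' ∈ J, ∀ (hyy' : y ≤ y') (hy'x : y' ≤ x),
      (A y).map (V.map (hyy'.trans hy'x)).toAffineMap ≤ (A y').map (V.map hy'x).toAffineMap := by
    intro y hy y' hy' hyy' hy'x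
    rw [← V.affineSubspace_map_map hyy' hy'x]
    exact AffineSubspace.map_mono _ (hAmap y hy y' hy' hyy')
  have hchain : IsChain (· ≤ ·) 𝒮 := by
    rintro _ ⟨y, hy, hyx, rfl⟩ _ ⟨y', hy', hy'x, rfl⟩ -
    rcases le_total y y' with hyy' | hy'y
    · exact Or.inl (image_mono y hy y' hy' hyy' hy'x)
    · exact Or.inr (image_mono y' hy' y hy hy'y hyx)
  have hne : ∀ B ∈ 𝒮, (B : Set (V.space x)).Nonempty := by
    rintro _ ⟨y, hy, hyx, rfl⟩
    rw [AffineSubspace.coe_map]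
    exact (hA y hy).image _
  obtain ⟨_, ⟨m, hm, hmx, rfl⟩, hmin⟩ :=
    AffineSubspace.exists_le_of_isChain hchain ⟨_, x, hx, le_rfl, rfl⟩ hne
  have hstable : stableImage V J A x = (A m).map (V.map hmx).toAffineMap :=
    le_antisymm (iInf₂_le_of_le m hm (iInf_le _ hmx))
      (le_iInf₂ fun y hy => le_iInf fun hyx => hmin _ ⟨y, hy, hyx, rfl⟩)
  refine ⟨m, hm, hmx, fun y hy hym => le_antisymm ?_ ?_⟩
  · exact iInf₂_le_of_le y hy (iInf_le _ _)
  · exact hstable ▸ image_mono y hy m hm hym hmx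

theorem stableImage_nonempty (hA : ∀ x ∈ J, (A x : Set (V.space x)).Nonempty)
    (hAmap : ∀ x ∈ J, ∀ y ∈ J, ∀ h : x ≤ y, (A x).map (V.map h).toAffineMap ≤ A y)
    {x : Q} (hx : x ∈ J) :
    (stableImage V J A x : Set (V.space x)).Nonempty := by
  obtain ⟨m, hm, hmx, heq⟩ := exists_stableImage_eq_map hA hAmap hx
  rw [heq m hm le_rfl, AffineSubspace.coe_map]
  exact (hA m hm).image _

theorem stableImage_map_eq (hA : ∀ x ∈ J, (A x : Set (V.space x)).Nonempty)
    (hAmap : ∀ x ∈ J, ∀ y ∈ J, ∀ h : x ≤ y, (A x).map (V.map h).toAffineMap ≤ A y)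
    {x y : Q} (hx : x ∈ J) (hy : y ∈ J) (hxy : x ≤ y) :
    (stableImage V J A x).map (V.map hxy).toAffineMap = stableImage V J A y := by
  obtain ⟨m, hm, hmx, hEx⟩ := exists_stableImage_eq_map hA hAmap hx
  obtain ⟨m', hm', hm'y, hEy⟩ := exists_stableImage_eq_map hA hAmap hy
  rw [hEx (min m m') (min_rec' J hm hm') (min_le_left m m'), V.affineSubspace_map_map,
    hEy (min m m') (min_rec' J hm hm') (min_le_right m m')]

end StableImage

section CompatibleSection

variable {k} {Q : Type v} [LinearOrder Q] {V : PersMod.{u, v, w} k Q} {J : Set Q}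
  {E : ∀ x, AffineSubspace k (V.space x)}

variable (V J E) in
/-- The graph of a compatible family of points `u_x ∈ E x` whose domain is an upper set of `J`. -/
def IsUpperSection (G : Set (Σ x, V.space x)) : Prop :=
  (∀ p ∈ G, p.1 ∈ J ∧ p.2 ∈ E p.1) ∧
  (∀ p ∈ G, ∀ q ∈ G, ∀ h : p.1 ≤ q.1, V.map h p.2 = q.2) ∧
  (∀ p ∈ G, ∀ y ∈ J, ∀ h : p.1 ≤ y, (⟨y, V.map h p.2⟩ : Σ x, V.space x) ∈ G)

theorem isUpperSection_sUnion {𝒞 : Set (Set (Σ x, V.space x))}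
    (h𝒞 : ∀ G ∈ 𝒞, IsUpperSection V J E G) (hchain : IsChain (· ⊆ ·) 𝒞) :
    IsUpperSection V J E (⋃₀ 𝒞) := by
  refine ⟨?_, ?_, ?_⟩
  · rintro p ⟨G, hG, hp⟩
    exact (h𝒞 G hG).1 p hp
  · rintro p ⟨G, hG, hp⟩ q ⟨G', hG', hq⟩ h
    rcases hchain.total hG hG' with hGG' | hG'G
    · exact (h𝒞 G' hG').2.1 p (hGG' hp) q hq h
    · exact (h𝒞 G hG).2.1 p hp q (hG'G hq) h
  · rintro p ⟨G, hG, hp⟩ y hy h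
    exact ⟨G, hG, (h𝒞 G hG).2.2 p hp y hy h⟩

variable [∀ x, FiniteDimensional k (V.space x)]

theorem IsUpperSection.exists_extension_point {G : Set (Σ x, V.space x)}
    (hG : IsUpperSection V J E G) (hE : ∀ x ∈ J, (E x : Set (V.space x)).Nonempty)
    (hEmap : ∀ x ∈ J, ∀ y ∈ J, ∀ h : x ≤ y, (E x).map (V.map h).toAffineMap = E y)
    {a : Q} (ha : a ∈ J) (haG : ∀ p ∈ G, a ≤ p.1) :
    ∃ u ∈ E a, ∀ p (hp : p ∈ G), V.map (haG p hp) u = p.2 := by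
  set C : G → AffineSubspace k (V.space a) := fun p =>
    E a ⊓ (affineSpan k {p.1.2}).comap (V.map (haG p.1 p.2)).toAffineMap
  have hC : ∀ p u, u ∈ C p ↔ u ∈ E a ∧ V.map (haG p.1 p.2) u = p.1.2 := by
    intro p u
    simp only [C, AffineSubspace.mem_inf_iff, AffineSubspace.mem_comap,
      LinearMap.coe_toAffineMap, AffineSubspace.mem_affineSpan_singleton]
  have hC_mono : ∀ p q : G, p.1.1 ≤ q.1.1 → C p ≤ C q := by
    intro p q hpq u hu
    rw [hC] at hu ⊢
    refine ⟨hu.1, ?_⟩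
    rw [← hG.2.1 p.1 p.2 q.1 q.2 hpq, ← hu.2, V.map_map]
  have hchain : IsChain (· ≤ ·) (insert (E a) (Set.range C)) := by
    refine IsChain.insert ?_ fun _ ⟨p, hp⟩ _ => Or.inr (hp ▸ inf_le_left)
    rintro _ ⟨p, rfl⟩ _ ⟨q, rfl⟩ -
    rcases le_total p.1.1 q.1.1 with hpq | hqp
    exacts [Or.inl (hC_mono p q hpq), Or.inr (hC_mono q p hqp)]
  have hne : ∀ B ∈ insert (E a) (Set.range C), (B : Set (V.space a)).Nonempty := by
    rintro _ (rfl | ⟨p, rfl⟩)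
    · exact hE a ha
    · have hp := (hG.1 p.1 p.2).2
      rw [← hEmap a ha p.1.1 (hG.1 p.1 p.2).1 (haG p.1 p.2), AffineSubspace.mem_map] at hp
      obtain ⟨u, hu, hup⟩ := hp
      exact ⟨u, (hC p u).2 ⟨hu, hup⟩⟩
  obtain ⟨B, hB, hBmin⟩ :=
    AffineSubspace.exists_le_of_isChain hchain (Set.insert_nonempty _ _) hne
  obtain ⟨u, hu⟩ := hne B hB
  refine ⟨u, hBmin _ (Set.mem_insert _ _) hu, fun p hp => ?_⟩
  exact ((hC ⟨p, hp⟩ u).1 (hBmin _ (Set.mem_insert_of_mem _ ⟨⟨p, hp⟩, rfl⟩) hu)).2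

theorem IsUpperSection.exists_extension {G : Set (Σ x, V.space x)}
    (hG : IsUpperSection V J E G) (hE : ∀ x ∈ J, (E x : Set (V.space x)).Nonempty)
    (hEmap : ∀ x ∈ J, ∀ y ∈ J, ∀ h : x ≤ y, (E x).map (V.map h).toAffineMap = E y)
    {a : Q} (ha : a ∈ J) (haG : ∀ u, (⟨a, u⟩ : Σ x, V.space x) ∉ G) :
    ∃ G', IsUpperSection V J E G' ∧ G ⊆ G' ∧ ∃ u, (⟨a, u⟩ : Σ x, V.space x) ∈ G' := by
  have haG' : ∀ p ∈ G, a ≤ p.1 := fun p hp =>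
    le_of_not_ge fun hpa => haG _ (hG.2.2 p hp a ha hpa)
  obtain ⟨u, hu, hup⟩ := hG.exists_extension_point hE hEmap ha haG'
  set H : Set (Σ x, V.space x) := {q | ∃ y ∈ J, ∃ h : a ≤ y, q = ⟨y, V.map h u⟩}
  refine ⟨G ∪ H, ⟨?_, ?_, ?_⟩, Set.subset_union_left, u,
    Or.inr ⟨a, ha, le_rfl, by rw [V.map_refl_apply]⟩⟩
  · rintro p (hp | ⟨x, hx, hax, rfl⟩)
    · exact hG.1 _ hp
    · exact ⟨hx, hEmap a ha x hx hax ▸ AffineSubspace.mem_map.2 ⟨u, hu, rfl⟩⟩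
  · rintro p (hp | ⟨x, -, hax, rfl⟩) q (hq | ⟨y, -, hay, rfl⟩) h
    · exact hG.2.1 _ hp _ hq h
    · rw [← hup _ hp, V.map_map]
    · rw [V.map_map, hup _ hq]
    · rw [V.map_map]
  · rintro p (hp | ⟨x, -, hax, rfl⟩) y hy h
    · exact Or.inl (hG.2.2 _ hp y hy h)
    · exact Or.inr ⟨y, hy, hax.trans h, by rw [V.map_map]⟩

theorem exists_compatible_section (hE : ∀ x ∈ J, (E x : Set (V.space x)).Nonempty)
    (hEmap : ∀ x ∈ J, ∀ y ∈ J, ∀ h : x ≤ y, (E x).map (V.map h).toAffineMap = E y) :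
    ∃ u : ∀ x, V.space x, (∀ x ∈ J, u x ∈ E x) ∧
      ∀ x ∈ J, ∀ y ∈ J, ∀ h : x ≤ y, V.map h (u x) = u y := by
  obtain ⟨G, hG, hGmax⟩ := zorn_subset {G | IsUpperSection V J E G} fun 𝒞 h𝒞 hchain =>
    ⟨⋃₀ 𝒞, isUpperSection_sUnion h𝒞 hchain, fun _ => Set.subset_sUnion_of_mem⟩
  have hdom : ∀ a ∈ J, ∃ u, (⟨a, u⟩ : Σ x, V.space x) ∈ G := by
    by_contra! ⟨a, ha, haG⟩
    obtain ⟨G', hG', hGG', u, hu⟩ := hG.exists_extension hE hEmap ha haG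
    exact haG u (hGmax hG' hGG' hu)
  choose! u hu using hdom
  exact ⟨u, fun x hx => (hG.1 _ (hu x hx)).2,
    fun x hx y hy h => hG.2.1 _ (hu x hx) _ (hu y hy) h⟩

end CompatibleSection

section Preimage

variable {k} (V : PersMod.{u, v, w} k P) {z : P} (v : V.space z)

def preimageSubspace (x : P) : AffineSubspace k (V.space x) :=
  ⨅ h : x ≤ z, (affineSpan k {v}).comap (V.map h).toAffineMap

variable {V v}

theorem mem_preimageSubspace {x : P} {u : V.space x} :
    u ∈ preimageSubspace V v x ↔ ∀ h : x ≤ z, V.map h u = v := by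
  simp [preimageSubspace, AffineSubspace.mem_iInf_iff, AffineSubspace.mem_comap]

theorem preimageSubspace_map_le {x y : P} (hxy : x ≤ y) :
    (preimageSubspace V v x).map (V.map hxy).toAffineMap ≤ preimageSubspace V v y := by
  rintro _ ⟨u, hu, rfl⟩
  exact mem_preimageSubspace.2 fun hyz => by
    simpa using mem_preimageSubspace.1 hu (hxy.trans hyz)

end Preimage

/-- Inverse-limit lemma: let `P` be totally ordered, `V` pointwise finite
dimensional, `z ∈ P`, `v ∈ V_z`, and let `I = {x ≤ z | V_{x,z}⁻¹(v) ≠ ∅}`.  Then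
there is a compatible family `(u_x)_{x ∈ I}` of preimages of `v`. -/
theorem exists_compatible_preimage_family (P : Type v) [LinearOrder P]
    (V : PersMod.{u, v, w} k P) (hfd : ∀ x : P, FiniteDimensional k (V.space x))
    (z : P) (v : V.space z) :
    ∃ u : ∀ x : P, V.space x,
      (∀ (x : P) (hxz : x ≤ z), (∃ w, V.map hxz w = v) → V.map hxz (u x) = v) ∧
      (∀ (x y : P) (hxy : x ≤ y) (hyz : y ≤ z),
        (∃ w, V.map (hxy.trans hyz) w = v) → (∃ w, V.map hyz w = v) →
        V.map hxy (u x) = u y) := by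
  set I : Set P := {x | ∃ h : x ≤ z, ∃ w, V.map h w = v}
  have hA : ∀ x ∈ I, (preimageSubspace V v x : Set (V.space x)).Nonempty := by
    rintro x ⟨hxz, w, hw⟩
    exact ⟨w, mem_preimageSubspace.2 fun _ => hw⟩
  have hAmap : ∀ x ∈ I, ∀ y ∈ I, ∀ h : x ≤ y,
      (preimageSubspace V v x).map (V.map h).toAffineMap ≤ preimageSubspace V v y :=
    fun _ _ _ _ h => preimageSubspace_map_le h
  obtain ⟨u, huE, hu⟩ := exists_compatible_section (E := stableImage V I (preimageSubspace V v))
    (fun _ hx => stableImage_nonempty hA hAmap hx)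
    (fun _ hx _ hy h => stableImage_map_eq hA hAmap hx hy h)
  refine ⟨u, fun x hxz hx => ?_,
    fun x y hxy hyz hx hy => hu x ⟨hxy.trans hyz, hx⟩ y ⟨hyz, hy⟩ hxy⟩
  exact mem_preimageSubspace.1 (stableImage_le (J := I) ⟨hxz, hx⟩ (huE x ⟨hxz, hx⟩)) hxz
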